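/- For every k ≥ 1 and β > 0, the derivative of the k-th Robin eigenvalue on (0,1) with respect to β satisfies 0 ≤ dλ_k/dβ ≤ 4. -/

import Mathlib

open Real Set

/-!
Both secular equations say `β = √λ · tan (√λ / 2 - (k - 1)π / 2)`, because `tan` has period `π`
and `tan (x + π / 2) = -1 / tan x`. On `(π²(k-1)², π²k²)` the phase `φ = √λ / 2 - (k - 1)π / 2`
lies in `(0, π / 2)`, so the `λ`-derivative `tan φ / (2√λ) + 1 / (4 cos² φ)` of the right-hand side
is at least `1 / 4`. Hence `λ_k` is the inverse of an increasing function with derivative `≥ 1 / 4`,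
and `0 < λ_k' ≤ 4`.
-/

theorem hasDerivAt_of_leftInvOn_of_deriv_pos {f g : ℝ → ℝ} {I J : Set ℝ}
    (hIc : Convex ℝ I) (hIo : IsOpen I) (hJ : IsOpen J) (hg' : ∀ x ∈ I, 0 < deriv g x)
    (hf : MapsTo f J I) (hgf : LeftInvOn g f J) {y : ℝ} (hy : y ∈ J) :
    HasDerivAt f (deriv g (f y))⁻¹ y := by
  have hg_diff : ∀ x ∈ I, DifferentiableAt ℝ g x := fun x hx =>
    differentiableAt_of_deriv_ne_zero (hg' x hx).ne'
  have hg_cont : ContinuousOn g I := fun x hx =>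
    (hg_diff x hx).continuousAt.continuousWithinAt
  have hg_mono : StrictMonoOn g I :=
    strictMonoOn_of_deriv_pos hIc hg_cont fun x hx => hg' x (interior_subset hx)
  have hf_mono : StrictMonoOn f J := fun a ha b hb hab => by
    rwa [← hg_mono.lt_iff_lt (hf ha) (hf hb), hgf ha, hgf hb]
  have himage : I ∩ g ⁻¹' J ⊆ f '' J := fun x ⟨hxI, hxJ⟩ =>
    ⟨g x, hxJ, hg_mono.injOn (hf hxJ) hxI (hgf hxJ)⟩
  have hf_cont : ContinuousAt f y :=
    hf_mono.continuousAt_of_image_mem_nhds (hJ.mem_nhds hy) <| Filter.mem_of_superset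
      ((hg_cont.isOpen_inter_preimage hIo hJ).mem_nhds
        ⟨hf hy, show g (f y) ∈ J by rwa [hgf hy]⟩) himage
  exact (hg_diff _ (hf hy)).hasDerivAt.of_local_left_inverse hf_cont (hg' _ (hf hy)).ne'
    (Filter.eventually_of_mem (hJ.mem_nhds hy) fun z hz => hgf hz)

theorem sqrt_mem_Ioo_of_mem_Ioo_sq {a b x : ℝ} (hb : 0 ≤ b) (hx : x ∈ Ioo (a ^ 2) (b ^ 2)) :
    √x ∈ Ioo a b :=
  ⟨lt_sqrt_of_sq_lt hx.1, sqrt_sq hb ▸ sqrt_lt_sqrt ((sq_nonneg a).trans hx.1.le) hx.2⟩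

theorem tan_sub_pred_mul_pi_div_two (k : ℕ) (x : ℝ) :
    tan (x - ((k : ℝ) - 1) * π / 2) = if Odd k then tan x else -(tan x)⁻¹ := by
  rcases Nat.even_or_odd' k with ⟨m, rfl | rfl⟩
  · have : x - ((↑(2 * m) : ℝ) - 1) * π / 2 = x + π / 2 - m * π := by push_cast; ring
    rw [if_neg (Nat.not_odd_iff_even.mpr (even_two_mul m)), this, tan_periodic.sub_nat_mul_eq,
      ← tan_periodic.sub_eq, show x + π / 2 - π = -(π / 2 - x) by ring, tan_neg,
      tan_pi_div_two_sub]
  · have : x - ((↑(2 * m + 1) : ℝ) - 1) * π / 2 = x - m * π := by push_cast; ring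
    rw [if_pos (odd_two_mul_add_one m), this, tan_periodic.sub_nat_mul_eq]

noncomputable def robinSecular (c x : ℝ) : ℝ := √x * tan (√x / 2 - c)

theorem robinSecular_pred_mul_pi_div_two (k : ℕ) (x : ℝ) :
    robinSecular (((k : ℝ) - 1) * π / 2) x =
      if Odd k then √x * tan (√x / 2) else -√x / tan (√x / 2) := by
  rw [robinSecular, tan_sub_pred_mul_pi_div_two]
  split_ifs <;> ring

theorem hasDerivAt_robinSecular {c x : ℝ} (hx : 0 < x) (hcos : cos (√x / 2 - c) ≠ 0) :
    HasDerivAt (robinSecular c)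
      (tan (√x / 2 - c) / (2 * √x) + 1 / (4 * cos (√x / 2 - c) ^ 2)) x := by
  have hsqrt := hasDerivAt_sqrt hx.ne'
  have htan := (hasDerivAt_tan hcos).comp x ((hsqrt.div_const 2).sub_const c)
  refine (hsqrt.mul htan).congr_deriv ?_
  have : 0 < √x := sqrt_pos.2 hx
  simp only [Function.comp_apply]
  field_simp
  ring

theorem one_quarter_le_deriv_robinSecular {c x : ℝ} (hx : 0 < x)
    (hphase : √x / 2 - c ∈ Ioo 0 (π / 2)) : 1 / 4 ≤ deriv (robinSecular c) x := by
  have hcos : 0 < cos (√x / 2 - c) :=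
    cos_pos_of_mem_Ioo ⟨by linarith [hphase.1, pi_pos], hphase.2⟩
  have htan : 0 < tan (√x / 2 - c) := tan_pos_of_pos_of_lt_pi_div_two hphase.1 hphase.2
  rw [(hasDerivAt_robinSecular hx hcos.ne').deriv]
  have hsec : 1 / 4 ≤ 1 / (4 * cos (√x / 2 - c) ^ 2) := by
    gcongr
    nlinarith [cos_sq_le_one (√x / 2 - c)]
  have htan_term : 0 ≤ tan (√x / 2 - c) / (2 * √x) := by positivity
  linarith

theorem robin_phase_mem_Ioo {κ x : ℝ} (hκ : 0 ≤ κ)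
    (hx : x ∈ Ioo (π ^ 2 * (κ - 1) ^ 2) (π ^ 2 * κ ^ 2)) :
    0 < x ∧ √x / 2 - (κ - 1) * π / 2 ∈ Ioo 0 (π / 2) := by
  rw [← mul_pow, ← mul_pow] at hx
  have hs := sqrt_mem_Ioo_of_mem_Ioo_sq (by positivity) hx
  exact ⟨(sq_nonneg _).trans_lt hx.1, by constructor <;> linarith [hs.1, hs.2]⟩

theorem robin_eigenvalue_derivative_bounds
    (k : ℕ) (lamk : ℝ → ℝ)
    (hmem : ∀ β : ℝ, 0 < β →
      lamk β ∈ Set.Ioo (Real.pi ^ 2 * ((k : ℝ) - 1) ^ 2) (Real.pi ^ 2 * (k : ℝ) ^ 2))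
    (heq : ∀ β : ℝ, 0 < β →
      if Odd k then β = Real.sqrt (lamk β) * Real.tan (Real.sqrt (lamk β) / 2)
      else β = -Real.sqrt (lamk β) / Real.tan (Real.sqrt (lamk β) / 2)) :
    ∀ β : ℝ, 0 < β → 0 ≤ deriv lamk β ∧ deriv lamk β ≤ 4 := by
  intro β hβ
  have hderiv_ge : ∀ x ∈ Ioo (π ^ 2 * ((k : ℝ) - 1) ^ 2) (π ^ 2 * (k : ℝ) ^ 2),
      1 / 4 ≤ deriv (robinSecular (((k : ℝ) - 1) * π / 2)) x := fun x hx =>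
    have hphase := robin_phase_mem_Ioo k.cast_nonneg hx
    one_quarter_le_deriv_robinSecular hphase.1 hphase.2
  have hinv : LeftInvOn (robinSecular (((k : ℝ) - 1) * π / 2)) lamk (Ioi 0) := fun β hβ => by
    have h := heq β hβ
    rw [robinSecular_pred_mul_pi_div_two]
    split_ifs at h ⊢ <;> exact h.symm
  have hlamk := hasDerivAt_of_leftInvOn_of_deriv_pos (convex_Ioo _ _) isOpen_Ioo isOpen_Ioi
    (fun x hx => by linarith [hderiv_ge x hx]) hmem hinv hβ
  have hquarter := hderiv_ge _ (hmem β hβ)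
  rw [hlamk.deriv]
  exact ⟨inv_nonneg.2 (by linarith), by simpa using inv_anti₀ (by norm_num) hquarter⟩
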